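/- Let M = {(x,y,z) ∈ ℝ³ : x² + y² − z² = −1, z > 0, (x,y,z) ≠ (0,0,1)}, let h(x,y,z) = (s·x, s·y, (z + √2)/2) with s = √((z² + 2√2·z − 2)/(4z² − 4)), and let C = {(x, y, √2) : x² + y² = 1}. Then for every p = (x,y,z) ∈ M, the iterates h^[n](p) converge as n → ∞ to the point (x/√(x² + y²), y/√(x² + y²), √2) ∈ C. In particular, C is a global attractor for h: the ω-limit set of every point of M is contained in C. -/

import Mathlib

open Filter Topology

noncomputable section

/-- The punctured hyperbolic space M = H²(1) ∖ {(0,0,1)}. -/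
def M3 : Set (ℝ × ℝ × ℝ) :=
  {p | p.1 ^ 2 + p.2.1 ^ 2 - p.2.2 ^ 2 = -1 ∧ 0 < p.2.2 ∧ p ≠ (0, 0, 1)}

/-- The scaling factor s(z) = √((z² + 2√2 z − 2)/(4z² − 4)). -/
def sFac (z : ℝ) : ℝ :=
  Real.sqrt ((z ^ 2 + 2 * Real.sqrt 2 * z - 2) / (4 * z ^ 2 - 4))

/-- The map h(x,y,z) = (s(z)·x, s(z)·y, (z + √2)/2). -/
def h3 (p : ℝ × ℝ × ℝ) : ℝ × ℝ × ℝ :=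
  (sFac p.2.2 * p.1, sFac p.2.2 * p.2.1, (p.2.2 + Real.sqrt 2) / 2)

/-- The circle C = {(x, y, √2) : x² + y² = 1}. -/
def C3 : Set (ℝ × ℝ × ℝ) :=
  {p | p.1 ^ 2 + p.2.1 ^ 2 = 1 ∧ p.2.2 = Real.sqrt 2}

lemma sqrt2_gt_one : (1:ℝ) < Real.sqrt 2 := by
  have := Real.sq_sqrt (by norm_num : (2:ℝ) ≥ 0)
  nlinarith [Real.sqrt_nonneg 2, Real.sq_sqrt (by norm_num : (0:ℝ) ≤ 2)]

lemma key (z : ℝ) (hz : 1 < z) :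
    sFac z * Real.sqrt (z ^ 2 - 1) = Real.sqrt (((z + Real.sqrt 2) / 2) ^ 2 - 1) := by
  have h2 : Real.sqrt 2 ^ 2 = 2 := Real.sq_sqrt (by norm_num)
  have h2p : (1:ℝ) < Real.sqrt 2 := sqrt2_gt_one
  have hA : 0 < z ^ 2 + 2 * Real.sqrt 2 * z - 2 := by nlinarith
  have hB : 0 < 4 * z ^ 2 - 4 := by nlinarith
  have hz1 : (0:ℝ) < z ^ 2 - 1 := by nlinarith
  have hsq : (sFac z * Real.sqrt (z ^ 2 - 1)) ^ 2 = ((z + Real.sqrt 2) / 2) ^ 2 - 1 := by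
    rw [mul_pow, sFac, Real.sq_sqrt (le_of_lt (div_pos hA hB)),
      Real.sq_sqrt hz1.le]
    field_simp
    nlinarith
  rw [← hsq, Real.sqrt_sq (by unfold sFac; positivity)]

/-- Example 4.1: the circle `C` is a global attractor for `h3` on `M`: the orbit of
every point `(x,y,z) ∈ M` converges to `(x/√(x²+y²), y/√(x²+y²), √2) ∈ C`. -/
theorem C3_global_attractor :
    ∀ p ∈ M3,
      (p.1 / Real.sqrt (p.1 ^ 2 + p.2.1 ^ 2), p.2.1 / Real.sqrt (p.1 ^ 2 + p.2.1 ^ 2),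
        Real.sqrt 2) ∈ C3 ∧
      Tendsto (fun n => h3^[n] p) atTop
        (𝓝 (p.1 / Real.sqrt (p.1 ^ 2 + p.2.1 ^ 2), p.2.1 / Real.sqrt (p.1 ^ 2 + p.2.1 ^ 2),
          Real.sqrt 2)) := by
  rintro ⟨x, y, z⟩ ⟨heq, hzpos, hne⟩
  simp only at heq hzpos hne ⊢
  have h2p : (1:ℝ) < Real.sqrt 2 := sqrt2_gt_one
  have hz : 1 < z := by
    rcases lt_or_ge 1 z with h | h
    · exact h
    · exfalso
      have hxy : x ^ 2 + y ^ 2 = z ^ 2 - 1 := by linarith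
      have : z ^ 2 ≤ 1 := by nlinarith
      have hx : x = 0 := by nlinarith [sq_nonneg x, sq_nonneg y]
      have hy : y = 0 := by nlinarith [sq_nonneg x, sq_nonneg y]
      have hz1 : z = 1 := by nlinarith
      exact hne (by simp [hx, hy, hz1])
  have hxy : x ^ 2 + y ^ 2 = z ^ 2 - 1 := by linarith
  have hz1 : (0:ℝ) < z ^ 2 - 1 := by nlinarith
  have hr : Real.sqrt (x ^ 2 + y ^ 2) = Real.sqrt (z ^ 2 - 1) := by rw [hxy]
  have hrpos : 0 < Real.sqrt (z ^ 2 - 1) := Real.sqrt_pos.mpr hz1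
  -- membership in C3
  constructor
  · constructor
    · rw [hr, div_pow, div_pow, ← add_div, Real.sq_sqrt hz1.le, hxy,
        div_self hz1.ne']
    · rfl
  -- closed form for the orbit
  set w : ℕ → ℝ := fun n => Real.sqrt 2 + (z - Real.sqrt 2) / 2 ^ n with hw
  have hwgt : ∀ n, 1 < w n := by
    intro n
    have h2n : (0:ℝ) < 2 ^ n := by positivity
    rcases le_or_gt (Real.sqrt 2) z with h | h
    · have : 0 ≤ (z - Real.sqrt 2) / 2 ^ n := div_nonneg (by linarith) h2n.le
      simp only [hw]; linarith
    · have h1n : (1:ℝ) ≤ 2 ^ n := one_le_pow₀ (by norm_num)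
      have h1 : z - Real.sqrt 2 ≤ (z - Real.sqrt 2) / 2 ^ n := by
        rw [le_div_iff₀ h2n]; nlinarith
      simp only [hw]; nlinarith
  have horbit : ∀ n, h3^[n] (x, y, z) =
      (x * Real.sqrt ((w n) ^ 2 - 1) / Real.sqrt (z ^ 2 - 1),
       y * Real.sqrt ((w n) ^ 2 - 1) / Real.sqrt (z ^ 2 - 1), w n) := by
    intro n
    induction n with
    | zero =>
      simp only [Function.iterate_zero, id_eq, hw]
      rw [pow_zero, div_one]
      have hzz : Real.sqrt 2 + (z - Real.sqrt 2) = z := by ring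
      rw [hzz]
      have hx : x * Real.sqrt (z ^ 2 - 1) / Real.sqrt (z ^ 2 - 1) = x :=
        mul_div_cancel_right₀ x hrpos.ne'
      have hy : y * Real.sqrt (z ^ 2 - 1) / Real.sqrt (z ^ 2 - 1) = y :=
        mul_div_cancel_right₀ y hrpos.ne'
      rw [hx, hy]
    | succ n ih =>
      rw [Function.iterate_succ_apply', ih]
      have hwn : 1 < w n := hwgt n
      have hkey := key (w n) hwn
      have hwn1 : w (n + 1) = (w n + Real.sqrt 2) / 2 := by
        simp only [hw]; ring
      simp only [h3]
      refine Prod.ext ?_ (Prod.ext ?_ ?_) <;> simp only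
      · rw [hwn1, ← hkey]; ring
      · rw [hwn1, ← hkey]; ring
      · rw [hwn1]
  -- convergence
  have hwlim : Tendsto w atTop (𝓝 (Real.sqrt 2)) := by
    have h0 : Tendsto (fun n : ℕ => (z - Real.sqrt 2) * (2⁻¹ : ℝ) ^ n) atTop (𝓝 ((z - Real.sqrt 2) * 0)) :=
      (tendsto_pow_atTop_nhds_zero_of_lt_one (by norm_num) (by norm_num)).const_mul _
    have : Tendsto (fun n : ℕ => Real.sqrt 2 + (z - Real.sqrt 2) * (2⁻¹ : ℝ) ^ n) atTop
        (𝓝 (Real.sqrt 2 + (z - Real.sqrt 2) * 0)) := h0.const_add _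
    simp only [mul_zero, add_zero] at this
    convert this using 2 with n
    simp [hw, div_eq_mul_inv, inv_pow]
  set g : ℝ → ℝ × ℝ × ℝ := fun t =>
    (x * Real.sqrt (t ^ 2 - 1) / Real.sqrt (z ^ 2 - 1),
     y * Real.sqrt (t ^ 2 - 1) / Real.sqrt (z ^ 2 - 1), t) with hg
  have hgc : Continuous g := by
    apply Continuous.prodMk
    · fun_prop
    · exact Continuous.prodMk (by fun_prop) continuous_id
  have hlim : Tendsto (fun n => h3^[n] (x, y, z)) atTop (𝓝 (g (Real.sqrt 2))) := by
    have := (hgc.continuousAt (x := Real.sqrt 2)).tendsto.comp hwlim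
    refine this.congr fun n => ?_
    rw [horbit n]; rfl
  have hg2 : g (Real.sqrt 2) =
      (x / Real.sqrt (x ^ 2 + y ^ 2), y / Real.sqrt (x ^ 2 + y ^ 2), Real.sqrt 2) := by
    have h2 : Real.sqrt 2 ^ 2 - 1 = 1 := by
      rw [Real.sq_sqrt (by norm_num : (0:ℝ) ≤ 2)]; norm_num
    simp only [hg, h2, Real.sqrt_one, mul_one, hr]
  rwa [hg2] at hlim
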